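/- arXiv:2411.04979 — 4 statements merged into one kernel-verified Lean document; each statement's English description precedes it below -/
import Mathlib

section
/- For all integers n with n ≡ 0 (mod 4) or n ≡ 1 (mod 4), the function c(k) = k + k(n-k)(n-k-1) is injective on {0, 1, ..., n}; that is, c(k) = c(m) implies k = m for all k, m in {0,...,n}. -/
/-!
`c(k) - c(m)` factors as `(k - m) * Q(n, k, m)` with `Q` the quadratic `costFactor`. When
`n ≡ 0` or `1 (mod 4)`, `Q(n, k, m)` is nonzero modulo `4` for every `k` and `m`, so `c(k) = c(m)`
forces `k = m`.
-/

section CommRing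

variable {R : Type*} [CommRing R]

def cost (n k : R) : R := k + k * (n - k) * (n - k - 1)

def costFactor (n k m : R) : R :=
  k ^ 2 + k * m + m ^ 2 + n ^ 2 - 2 * n * (k + m) - n + (k + m) + 1

theorem cost_sub_cost (n k m : R) : cost n k - cost n m = (k - m) * costFactor n k m := by
  unfold cost costFactor
  ring

theorem map_costFactor {S : Type*} [CommRing S] (f : R →+* S) (n k m : R) :
    f (costFactor n k m) = costFactor (f n) (f k) (f m) := by
  simp only [costFactor, map_add, map_sub, map_mul, map_pow, map_one, map_ofNat]

end CommRing

theorem costFactor_zmod_four_ne_zero :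
    ∀ n k m : ZMod 4, (n = 0 ∨ n = 1) → costFactor n k m ≠ 0 := by
  decide

theorem costFactor_ne_zero {n : ℤ} (hn : n % 4 = 0 ∨ n % 4 = 1) (k m : ℤ) :
    costFactor n k m ≠ 0 := by
  intro h
  have hn4 : (n : ZMod 4) = 0 ∨ (n : ZMod 4) = 1 := by
    rw [← ZMod.intCast_mod n 4]
    rcases hn with hn | hn <;> simp [hn]
  apply costFactor_zmod_four_ne_zero _ k m hn4
  simpa [h] using (map_costFactor (Int.castRingHom (ZMod 4)) n k m).symm

theorem cost_injective {n : ℤ} (hn : n % 4 = 0 ∨ n % 4 = 1) : Function.Injective (cost n) := by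
  intro k m h
  have hprod : (k - m) * costFactor n k m = 0 := by rw [← cost_sub_cost, h, sub_self]
  exact sub_eq_zero.mp ((mul_eq_zero.mp hprod).resolve_right (costFactor_ne_zero hn k m))

theorem stmt_0_general (n : ℤ) (hn : n % 4 = 0 ∨ n % 4 = 1)
    (k m : ℤ)
    (h : k + k * (n - k) * (n - k - 1) = m + m * (n - m) * (n - m - 1)) :
    k = m :=
  cost_injective hn h

/-- For all integers `n` with `n ≡ 0` or `1 (mod 4)`, the cost function
`c(k) = k + k(n-k)(n-k-1)` is injective on `{0,...,n}`. -/
theorem stmt_0 (n : ℤ) (hn : n % 4 = 0 ∨ n % 4 = 1)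
    (k m : ℤ) (hk0 : 0 ≤ k) (hkn : k ≤ n) (hm0 : 0 ≤ m) (hmn : m ≤ n)
    (h : k + k * (n - k) * (n - k - 1) = m + m * (n - m) * (n - m - 1)) :
    k = m :=
  stmt_0_general n hn k m h
end

section
/- If n ≡ 0 or 1 (mod 4), then there are no integers k and δ satisfying k² + k(δ + 1 - n) + δ² + δ + 1 = 0. -/
theorem sq_add_mul_add_sq_add_add_one_ne_zero_zmod_four (n k δ : ZMod 4) (hn : n = 0 ∨ n = 1) :
    k ^ 2 + k * (δ + 1 - n) + δ ^ 2 + δ + 1 ≠ 0 := by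
  revert n k δ
  decide

/-- If `n ≡ 0` or `1 (mod 4)`, there are no integers `k`, `δ` with
`k² + k(δ + 1 - n) + δ² + δ + 1 = 0`. -/
theorem stmt_1 (n : ℤ) (hn : n % 4 = 0 ∨ n % 4 = 1) (k δ : ℤ) :
    k ^ 2 + k * (δ + 1 - n) + δ ^ 2 + δ + 1 ≠ 0 := by
  intro h
  have hn4 : (n : ZMod 4) = 0 ∨ (n : ZMod 4) = 1 := by
    rw [← ZMod.intCast_mod n 4]
    rcases hn with hn | hn <;> simp [hn]
  apply sq_add_mul_add_sq_add_add_one_ne_zero_zmod_four n k δ hn4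
  exact_mod_cast congrArg (Int.cast : ℤ → ZMod 4) h
end

section
/- Let C = ∑_α C_α with C_α : {0,1}ⁿ → {0,1} and C_α² = C_α, and let C̃_w = ∑_α w_α C_α with i.i.d. weights w_α of mean f ≠ 0 and variance σ². Then E_w[ 2^{-n} ∑_{x ∈ {0,1}ⁿ} |e^{iγC(x)} − e^{i(γ/f)C̃_w(x)}|² ] ≤ (γ²σ²/f²) · 2^{-n} ∑_{x ∈ {0,1}ⁿ} C(x). -/
open MeasureTheory Finset

lemma exp_I_sub_sq (a b : ℝ) :
    ‖Complex.exp (Complex.I * a) - Complex.exp (Complex.I * b)‖ ^ 2 ≤ (a - b) ^ 2 := by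
  have ha : Complex.I * (a : ℂ) = (a : ℂ) * Complex.I := by ring
  have hb : Complex.I * (b : ℂ) = (b : ℂ) * Complex.I := by ring
  rw [ha, hb, Complex.sq_norm, Complex.normSq_apply, Complex.sub_re, Complex.sub_im,
    Complex.exp_ofReal_mul_I_re, Complex.exp_ofReal_mul_I_im,
    Complex.exp_ofReal_mul_I_re, Complex.exp_ofReal_mul_I_im]
  nlinarith [Real.one_sub_sq_div_two_le_cos (x := a - b), Real.cos_sub a b,
    Real.sin_sq_add_cos_sq a, Real.sin_sq_add_cos_sq b]

lemma var_sum {Ω : Type*} [MeasurableSpace Ω] (μ : Measure Ω) [IsProbabilityMeasure μ]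
    {ι : Type*} [Fintype ι] (w : ι → Ω → ℝ) (f σ : ℝ)
    (hL2 : ∀ α, MemLp (w α) 2 μ)
    (hindep : ProbabilityTheory.iIndepFun w μ)
    (hmean : ∀ α, ∫ ω, w α ω ∂μ = f)
    (hvar : ∀ α, ∫ ω, (w α ω - f) ^ 2 ∂μ = σ ^ 2)
    (c : ι → ℝ) (hc : ∀ α, c α = 0 ∨ c α = 1) :
    ∫ ω, (∑ α, (w α ω - f) * c α) ^ 2 ∂μ = σ ^ 2 * ∑ α, c α := by
  classical
  have hg2 : ∀ α, MemLp (fun ω => w α ω - f) 2 μ := fun α =>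
    (hL2 α).sub (memLp_const f)
  have hgint : ∀ α, Integrable (fun ω => w α ω - f) μ :=
    fun α => (hg2 α).integrable one_le_two
  have hgmean : ∀ α, ∫ ω, (w α ω - f) ∂μ = 0 := by
    intro α
    rw [integral_sub ((hL2 α).integrable one_le_two) (integrable_const f), hmean,
      integral_const, probReal_univ, one_smul, sub_self]
  have hprod : ∀ α β : ι, Integrable (fun ω => (w α ω - f) * (w β ω - f)) μ := by
    intro α β
    rcases eq_or_ne α β with rfl | h
    · simpa [pow_two] using (hg2 α).integrable_sq
    · exact ((hindep.indepFun h).comp (φ := fun x => x - f) (ψ := fun x => x - f)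
        (measurable_id.sub measurable_const)
        (measurable_id.sub measurable_const)).integrable_mul (hgint α) (hgint β)
  have hcov : ∀ α β : ι, ∫ ω, (w α ω - f) * (w β ω - f) ∂μ =
      if α = β then σ ^ 2 else 0 := by
    intro α β
    rcases eq_or_ne α β with rfl | h
    · simp only [if_pos rfl]; rw [← hvar α]; congr 1; ext ω; ring
    · have hI := ((hindep.indepFun h).comp (φ := fun x => x - f) (ψ := fun x => x - f)
          (measurable_id.sub measurable_const)
          (measurable_id.sub measurable_const)).integral_mul_eq_mul_integral
          (hgint α).aestronglyMeasurable (hgint β).aestronglyMeasurable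
      rw [if_neg h]
      simpa [Function.comp_def, Pi.mul_apply, hgmean α, hgmean β] using hI
  have key : (fun ω => (∑ α, (w α ω - f) * c α) ^ 2) =
      fun ω => ∑ α, ∑ β, (c α * c β) * ((w α ω - f) * (w β ω - f)) := by
    funext ω
    rw [pow_two, Finset.sum_mul_sum]
    exact Finset.sum_congr rfl fun α _ => Finset.sum_congr rfl fun β _ => by ring
  rw [key, integral_finset_sum _ (fun α _ => integrable_finset_sum _
    (fun β _ => ((hprod α β).const_mul _)))]
  have : ∀ α, ∫ ω, ∑ β, (c α * c β) * ((w α ω - f) * (w β ω - f)) ∂μ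
      = σ ^ 2 * c α := by
    intro α
    rw [integral_finset_sum _ (fun β _ => (hprod α β).const_mul _)]
    have h2 : ∀ β, ∫ ω, (c α * c β) * ((w α ω - f) * (w β ω - f)) ∂μ
        = (c α * c β) * if α = β then σ ^ 2 else 0 := by
      intro β; rw [integral_const_mul, hcov]
    rw [Finset.sum_congr rfl fun β _ => h2 β]
    rw [Finset.sum_eq_single α (fun β _ hβ => by simp [Ne.symm hβ]) (by simp)]
    simp only [if_pos rfl]
    rcases hc α with h | h <;> simp [h]
  rw [Finset.sum_congr rfl fun α _ => this α, ← Finset.mul_sum]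

/-- For `C = ∑_α C_α` with 0/1-valued clauses and i.i.d. weights `w_α` of mean `f ≠ 0` and
variance `σ²`,
`E_w[2^{-n} ∑_x |e^{iγC(x)} − e^{i(γ/f)C̃_w(x)}|²] ≤ (γ²σ²/f²) · 2^{-n} ∑_x C(x)`. -/
theorem stmt_9 {Ω : Type*} [MeasurableSpace Ω] (μ : Measure Ω) [IsProbabilityMeasure μ]
    {ι : Type*} [Fintype ι] (n : ℕ)
    (Cα : ι → (Fin n → Bool) → ℝ) (hC : ∀ α x, Cα α x = 0 ∨ Cα α x = 1)
    (w : ι → Ω → ℝ) (f σ γ : ℝ) (hf : f ≠ 0)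
    (hmeas : ∀ α, Measurable (w α))
    (hL2 : ∀ α, MeasureTheory.MemLp (w α) 2 μ)
    (hindep : ProbabilityTheory.iIndepFun w μ)
    (hid : ∀ α α', ProbabilityTheory.IdentDistrib (w α) (w α') μ μ)
    (hmean : ∀ α, ∫ ω, w α ω ∂μ = f)
    (hvar : ∀ α, ∫ ω, (w α ω - f) ^ 2 ∂μ = σ ^ 2) :
    (∫ ω, ((2 : ℝ) ^ (-(n : ℤ)) *
        ∑ x : Fin n → Bool,
          ‖Complex.exp (Complex.I * γ * ((∑ α, Cα α x : ℝ) : ℂ)) -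
            Complex.exp (Complex.I * ((γ / f : ℝ) : ℂ) * ((∑ α, w α ω * Cα α x : ℝ) : ℂ))‖ ^ 2) ∂μ)
      ≤ γ ^ 2 * σ ^ 2 / f ^ 2 *
          ((2 : ℝ) ^ (-(n : ℤ)) * ∑ x : Fin n → Bool, ∑ α, Cα α x) := by
  classical
  set N : ℝ := (2 : ℝ) ^ (-(n : ℤ)) with hNdef
  have hN0 : (0:ℝ) ≤ N := by positivity
  have hsum2 : ∀ x : Fin n → Bool,
      MemLp (fun ω => ∑ α, (w α ω - f) * Cα α x) 2 μ := by
    intro x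
    have h := memLp_finset_sum' (μ := μ) (p := 2) Finset.univ
      (f := fun α ω => (w α ω - f) * Cα α x) (fun α _ => by
        simpa [mul_comm] using ((hL2 α).sub (memLp_const f)).const_mul (Cα α x))
    rw [Finset.sum_fn] at h
    exact h
  have hsqint : ∀ x : Fin n → Bool,
      Integrable (fun ω => (∑ α, (w α ω - f) * Cα α x) ^ 2) μ := fun x =>
    (hsum2 x).integrable_sq
  set G : Ω → ℝ := fun ω => N * ∑ x : Fin n → Bool, (γ / f) ^ 2 *
      (∑ α, (w α ω - f) * Cα α x) ^ 2 with hGdef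
  have hGint : Integrable G μ :=
    (integrable_finset_sum _ fun x _ => (hsqint x).const_mul _).const_mul N
  have hpt : ∀ ω, ((2 : ℝ) ^ (-(n : ℤ)) *
        ∑ x : Fin n → Bool,
          ‖Complex.exp (Complex.I * γ * ((∑ α, Cα α x : ℝ) : ℂ)) -
            Complex.exp (Complex.I * ((γ / f : ℝ) : ℂ) *
              ((∑ α, w α ω * Cα α x : ℝ) : ℂ))‖ ^ 2) ≤ G ω := by
    intro ω
    refine mul_le_mul_of_nonneg_left (Finset.sum_le_sum fun x _ => ?_) hN0
    set C : ℝ := ∑ α, Cα α x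
    set Ct : ℝ := ∑ α, w α ω * Cα α x
    have harg1 : Complex.I * (γ : ℂ) * (C : ℂ) = Complex.I * ((γ * C : ℝ) : ℂ) := by
      push_cast; ring
    have harg2 : Complex.I * ((γ / f : ℝ) : ℂ) * (Ct : ℂ) =
        Complex.I * ((γ / f * Ct : ℝ) : ℂ) := by push_cast; ring
    rw [harg1, harg2]
    refine le_trans (exp_I_sub_sq _ _) (le_of_eq ?_)
    have hsub : ∑ α, (w α ω - f) * Cα α x = Ct - f * C := by
      simp only [sub_mul, Finset.sum_sub_distrib, Ct, C, Finset.mul_sum]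
    rw [hsub]
    field_simp
    ring
  refine le_trans (integral_mono_of_nonneg (Filter.Eventually.of_forall fun ω => ?_) hGint
    (Filter.Eventually.of_forall hpt)) ?_
  · positivity
  · have hGval : ∫ ω, G ω ∂μ =
        N * ∑ x : Fin n → Bool, (γ / f) ^ 2 * (σ ^ 2 * ∑ α, Cα α x) := by
      rw [hGdef]
      simp only
      rw [integral_const_mul, integral_finset_sum _ fun x _ => (hsqint x).const_mul _]
      congr 1
      refine Finset.sum_congr rfl fun x _ => ?_
      rw [integral_const_mul, var_sum μ w f σ hL2 hindep hmean hvar _ (fun α => hC α x)]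
    rw [hGval, Finset.mul_sum, Finset.mul_sum, Finset.mul_sum]
    refine le_of_eq (Finset.sum_congr rfl fun x _ => ?_)
    field_simp
end

section
/- For the cost function c(k) = k + k(n−k)(n−k−1) on {0,...,n}, c(0) = 0 is the unique global minimum, c is strictly decreasing on the integer range ⌈n/3⌉ + 1 ≤ k ≤ n − 1 for sufficiently large n, and c(n−1) = n−1 < c(k) for all k with 1 ≤ k ≤ n−2 (i.e., k = n−1 is a strict local minimum among {1,...,n}). -/
/-!
Write `m = n - k`, so that `c k = k + k m (m - 1)`. The product `m (m - 1)` of consecutive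
integers is never negative, hence `c k ≥ k`, and when `m ≥ 2` also `c k ≥ k + k m`; since
`k (n - k) = (k - 1)(n - k - 1) + (n - 1)`, this exceeds `n - 1` for `1 ≤ k ≤ n - 2`.
For monotonicity, `c k - c (k + 1) = (n - k - 1)(3k + 2 - n) - 1`, which is positive as soon as
`n ≤ 3k` and `k + 2 ≤ n`.
-/

namespace HillClimbing

def cost (n k : ℤ) : ℤ := k + k * (n - k) * (n - k - 1)

lemma mul_sub_one_self_nonneg (m : ℤ) : 0 ≤ m * (m - 1) := by
  rcases le_or_gt m 0 with hm | hm
  · nlinarith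
  · nlinarith

lemma cost_zero (n : ℤ) : cost n 0 = 0 := by simp [cost]

lemma cost_sub_one (n : ℤ) : cost n (n - 1) = n - 1 := by simp [cost]

lemma le_cost {n k : ℤ} (hk : 0 ≤ k) : k ≤ cost n k := by
  have := mul_nonneg hk (mul_sub_one_self_nonneg (n - k))
  unfold cost
  linarith

lemma cost_pos {n k : ℤ} (hk : 0 < k) : 0 < cost n k :=
  hk.trans_le (le_cost hk.le)

lemma sub_one_lt_cost {n k : ℤ} (hk : 1 ≤ k) (hkn : k + 2 ≤ n) : n - 1 < cost n k := by
  have hsplit : k * (n - k) = (k - 1) * (n - k - 1) + (n - 1) := by ring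
  have hsplit_nonneg : 0 ≤ (k - 1) * (n - k - 1) := mul_nonneg (by omega) (by omega)
  have hgap : k * (n - k) ≤ k * (n - k) * (n - k - 1) :=
    le_mul_of_one_le_right (mul_nonneg (by omega) (by omega)) (by omega)
  unfold cost
  linarith

lemma cost_sub_cost_succ (n k : ℤ) :
    cost n k - cost n (k + 1) = (n - k - 1) * (3 * k + 2 - n) - 1 := by
  unfold cost
  ring

lemma cost_succ_lt {n k : ℤ} (h3k : n ≤ 3 * k) (hkn : k + 2 ≤ n) :
    cost n (k + 1) < cost n k := by
  have : 1 * 2 ≤ (n - k - 1) * (3 * k + 2 - n) :=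
    mul_le_mul (by omega) (by omega) (by omega) (by omega)
  linarith [cost_sub_cost_succ n k]

end HillClimbing

open HillClimbing in
/-- For `c(k) = k + k(n−k)(n−k−1)` on `{0,...,n}` and sufficiently large `n`:
`c(0) = 0` is the unique global minimum; `c` is strictly decreasing on the range
`⌈n/3⌉ + 1 ≤ k ≤ n − 1`; and `c(n−1) = n−1 < c(k)` for all `1 ≤ k ≤ n−2`, so `k = n−1`
is a strict local minimum among `{1,...,n}`. -/
theorem stmt_15 :
    ∃ N : ℕ, ∀ n : ℕ, N ≤ n →
      (let c : ℕ → ℤ := fun k => (k : ℤ) + (k : ℤ) * ((n : ℤ) - k) * ((n : ℤ) - k - 1);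
        (c 0 = 0 ∧ ∀ k, 1 ≤ k → k ≤ n → c 0 < c k) ∧
        (∀ k, (n + 2) / 3 + 1 ≤ k → k < n - 1 → c (k + 1) < c k) ∧
        (c (n - 1) = (n : ℤ) - 1 ∧ ∀ k, 1 ≤ k → k ≤ n - 2 → (n : ℤ) - 1 < c k)) := by
  refine ⟨1, fun n hn => ?_⟩
  intro c
  have hc : ∀ k, c k = cost n k := fun _ => rfl
  simp only [hc, Nat.cast_zero, cost_zero, Nat.cast_pred hn, cost_sub_one, Nat.cast_succ,
    true_and]
  exact ⟨fun k hk _ => cost_pos (by omega),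
    fun k hk hkn => cost_succ_lt (by omega) (by omega),
    fun k hk hkn => sub_one_lt_cost (by omega) (by omega)⟩
end
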